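/- Let Q be a commutative unital quantale. The quantale space of all prime ideals of Q (i.e., the prime spectrum with the topology whose closed sets are generated by the sets I↑ = {P prime : I ⊆ P}) is sober. -/

import Mathlib

namespace QuantalePaper

/-- An ideal of a complete lattice: nonempty, downward closed, closed under binary joins. -/
structure QIdeal (Q : Type*) [CompleteLattice Q] where
  carrier : Set Q
  nonempty' : carrier.Nonempty
  sup_mem' : ∀ ⦃x⦄, x ∈ carrier → ∀ ⦃y⦄, y ∈ carrier → x ⊔ y ∈ carrier
  lower' : ∀ ⦃x⦄, x ∈ carrier → ∀ ⦃l : Q⦄, l ≤ x → l ∈ carrier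

namespace QIdeal

variable {Q : Type*} [CompleteLattice Q]

instance : SetLike (QIdeal Q) Q where
  coe := carrier
  coe_injective := by rintro ⟨a,_,_,_⟩ ⟨b,_,_,_⟩ h; simpa using h

instance : PartialOrder (QIdeal Q) := .ofSetLike (QIdeal Q) Q

/-- A proper ideal. -/
def IsProper (I : QIdeal Q) : Prop := (⊤ : Q) ∉ I

/-- A maximal ideal: a proper ideal maximal among proper ideals. -/
def IsMaximal (I : QIdeal Q) : Prop :=
  I.IsProper ∧ ∀ J : QIdeal Q, J.IsProper → I ≤ J → J = I

/-- A prime ideal. -/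
def IsPrime [Mul Q] (I : QIdeal Q) : Prop :=
  I.IsProper ∧ ∀ x y : Q, x * y ∈ I → x ∈ I ∨ y ∈ I

end QIdeal

variable {Q : Type*} [CompleteLattice Q]

/-- The subbasic closed set `I↑ ∩ Σ` inside the subtype of a class `S` of ideals. -/
def up (S : Set (QIdeal Q)) (I : QIdeal Q) : Set ↥S := {J : ↥S | (I : Set Q) ⊆ (J : QIdeal Q)}

/-- The quantale topology on a class `S` of ideals, generated by the sets `up S I`
as a subbasis of closed sets. -/
def qTop (S : Set (QIdeal Q)) : TopologicalSpace ↥S :=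
  .generateFrom {U | ∃ I : QIdeal Q, U = (up S I)ᶜ}

/-- `X↑` for a set `X` of ideals: members of `S` containing the intersection `⋀X`,
with `∅↑ = ∅`. -/
def upSet (S : Set (QIdeal Q)) (X : Set (QIdeal Q)) : Set ↥S :=
  {J : ↥S | X.Nonempty ∧ ∀ x : Q, (∀ I ∈ X, x ∈ I) → x ∈ (J : QIdeal Q)}

/-!
Because `⊤ = 1`, `x * y ≤ x ⊓ y`, so for prime ideals `(I ∩ J)↑ = I↑ ∪ J↑`. Hence the complements
of the sets `I↑` form a basis, and the closure of any set `T` of primes is `(⋂ T)↑`. An irreducible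
closed set `C` is therefore the closure of the point `⋂ C`, which is prime since `C` cannot be
covered by `(↓x)↑ ∪ (↓y)↑` without lying in one of them. Finally `closure {P} = P↑` determines `P`,
which gives T0.
-/

lemma QIdeal.bot_mem (I : QIdeal Q) : (⊥ : Q) ∈ I := by
  obtain ⟨x, hx⟩ := I.nonempty'
  exact I.lower' hx bot_le

def QIdeal.principal (a : Q) : QIdeal Q where
  carrier := Set.Iic a
  nonempty' := ⟨a, le_rfl⟩
  sup_mem' _ hx _ hy := sup_le hx hy
  lower' _ hx _ hl := hl.trans hx

instance : Min (QIdeal Q) where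
  min I J :=
    { carrier := (I : Set Q) ∩ J
      nonempty' := ⟨⊥, I.bot_mem, J.bot_mem⟩
      sup_mem' _ hx _ hy := ⟨I.sup_mem' hx.1 hy.1, J.sup_mem' hx.2 hy.2⟩
      lower' _ hx _ hl := ⟨I.lower' hx.1 hl, J.lower' hx.2 hl⟩ }

def kernel {S : Set (QIdeal Q)} (T : Set ↥S) : QIdeal Q where
  carrier := {x | ∀ J ∈ T, x ∈ (J : QIdeal Q)}
  nonempty' := ⟨⊥, fun J _ => (J : QIdeal Q).bot_mem⟩
  sup_mem' _ hx _ hy J hJ := (J : QIdeal Q).sup_mem' (hx J hJ) (hy J hJ)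
  lower' _ hx _ hl J hJ := (J : QIdeal Q).lower' (hx J hJ) hl

instance (S : Set (QIdeal Q)) : TopologicalSpace ↥S := qTop S

section Topology

variable {S : Set (QIdeal Q)}

lemma mem_kernel {T : Set ↥S} {x : Q} : x ∈ kernel T ↔ ∀ J ∈ T, x ∈ (J : QIdeal Q) := Iff.rfl

lemma kernel_singleton (P : ↥S) : kernel {P} = P :=
  SetLike.ext fun _ => by simp [mem_kernel]

lemma self_mem_up (P : ↥S) : P ∈ up S P := Set.Subset.rfl

lemma up_anti {I J : QIdeal Q} (h : (I : Set Q) ⊆ J) : up S J ⊆ up S I :=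
  fun _ hK => h.trans hK

lemma mem_up_principal {a : Q} {J : ↥S} : J ∈ up S (QIdeal.principal a) ↔ a ∈ (J : QIdeal Q) :=
  ⟨fun h => h le_rfl, fun h _ hx => (J : QIdeal Q).lower' h hx⟩

lemma subset_up_kernel (T : Set ↥S) : T ⊆ up S (kernel T) := fun J hJ _ hx => hx J hJ

lemma isClosed_up (I : QIdeal Q) : IsClosed (up S I) :=
  ⟨.basic _ ⟨I, rfl⟩⟩

end Topology

abbrev Spec (Q : Type*) [CompleteLattice Q] [Mul Q] : Set (QIdeal Q) := {P | P.IsPrime}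

section Mul

variable [Mul Q]

lemma up_principal_top : up (Spec Q) (QIdeal.principal ⊤) = ∅ :=
  Set.eq_empty_of_forall_notMem fun P hP => P.2.1 (mem_up_principal.mp hP)

lemma isPrime_kernel {T : Set ↥(Spec Q)} (hT : IsIrreducible T) : (kernel T).IsPrime := by
  obtain ⟨P, hP⟩ := hT.nonempty
  refine ⟨fun htopT => P.2.1 (htopT P hP), fun x y hxy => ?_⟩
  have hcover : T ⊆ up (Spec Q) (.principal x) ∪ up (Spec Q) (.principal y) := fun R hR => by
    simpa only [Set.mem_union, mem_up_principal] using R.2.2 x y (hxy R hR)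
  rcases isPreirreducible_iff_isClosed_union_isClosed.mp hT.2 _ _
    (isClosed_up _) (isClosed_up _) hcover with h | h
  · exact .inl fun R hR => mem_up_principal.mp (h hR)
  · exact .inr fun R hR => mem_up_principal.mp (h hR)

end Mul

section Spec

variable [CommMonoid Q] [IsQuantale Q]

lemma up_inf (htop : (1 : Q) = ⊤) (I J : QIdeal Q) :
    up (Spec Q) (I ⊓ J) = up (Spec Q) I ∪ up (Spec Q) J := by
  refine subset_antisymm (fun P hP => ?_)
    (Set.union_subset (up_anti Set.inter_subset_left) (up_anti Set.inter_subset_right))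
  by_contra hPIJ
  obtain ⟨⟨x, hxI, hxP⟩, ⟨y, hyJ, hyP⟩⟩ := not_or.mp hPIJ |>.imp Set.not_subset.mp Set.not_subset.mp
  have hxy : x * y ∈ I ⊓ J :=
    ⟨I.lower' hxI (mul_le_of_le_one_right' (htop ▸ le_top)),
      J.lower' hyJ (mul_le_of_le_one_left' (htop ▸ le_top))⟩
  exact (P.2.2 x y (hP hxy)).elim hxP hyP

lemma exists_up_of_isOpen (htop : (1 : Q) = ⊤) {U : Set ↥(Spec Q)} (hU : IsOpen U) :
    ∀ P ∈ U, ∃ I : QIdeal Q, P ∉ up (Spec Q) I ∧ (up (Spec Q) I)ᶜ ⊆ U := by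
  induction hU with
  | basic V hV =>
    obtain ⟨I, rfl⟩ := hV
    exact fun P hP => ⟨I, hP, subset_rfl⟩
  | univ =>
    exact fun P _ => ⟨QIdeal.principal ⊤, by simp [up_principal_top], Set.subset_univ _⟩
  | inter U V _ _ ihU ihV =>
    rintro P ⟨hPU, hPV⟩
    obtain ⟨I, hPI, hIU⟩ := ihU P hPU
    obtain ⟨J, hPJ, hJV⟩ := ihV P hPV
    refine ⟨I ⊓ J, ?_, ?_⟩ <;> rw [up_inf htop]
    · exact fun h => h.elim hPI hPJ
    · rw [Set.compl_union]
      exact Set.inter_subset_inter hIU hJV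
  | sUnion 𝒰 _ ih =>
    rintro P ⟨U, hU, hPU⟩
    obtain ⟨I, hPI, hIU⟩ := ih U hU P hPU
    exact ⟨I, hPI, hIU.trans (Set.subset_sUnion_of_mem hU)⟩

lemma closure_eq_up_kernel (htop : (1 : Q) = ⊤) (T : Set ↥(Spec Q)) :
    closure T = up (Spec Q) (kernel T) := by
  refine subset_antisymm (closure_minimal (subset_up_kernel T) (isClosed_up _)) fun P hP => ?_
  rw [mem_closure_iff]
  intro U hU hPU
  obtain ⟨I, hPI, hIU⟩ := exists_up_of_isOpen htop hU P hPU
  -- `I ⊄ P ⊇ ⋂ T`, so some member of `T` misses `I`.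
  obtain ⟨x, hxI, hxT⟩ := Set.not_subset.mp fun h => hPI (h.trans hP)
  obtain ⟨R, hRT, hxR⟩ := not_forall₂.mp hxT
  exact ⟨R, hIU fun h => hxR (h hxI), hRT⟩

lemma closure_singleton_eq_up (htop : (1 : Q) = ⊤) (P : ↥(Spec Q)) :
    closure {P} = up (Spec Q) P := by
  rw [closure_eq_up_kernel htop, kernel_singleton]

lemma quasiSober_spec (htop : (1 : Q) = ⊤) : QuasiSober ↥(Spec Q) where
  sober {C} hirr hclosed := by
    refine ⟨⟨kernel C, isPrime_kernel hirr⟩, ?_⟩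
    rw [IsGenericPoint, closure_singleton_eq_up htop, ← closure_eq_up_kernel htop, hclosed.closure_eq]

lemma t0Space_spec (htop : (1 : Q) = ⊤) : T0Space ↥(Spec Q) where
  t0 P R h := by
    rw [inseparable_iff_closure_eq, closure_singleton_eq_up htop, closure_singleton_eq_up htop] at h
    have hPR : P ∈ up (Spec Q) R := h ▸ self_mem_up P
    have hRP : R ∈ up (Spec Q) P := h ▸ self_mem_up R
    exact Subtype.ext (SetLike.coe_injective (subset_antisymm hRP hPR))

end Spec

theorem stmt12 [CommMonoid Q] [IsQuantale Q] (htop : (1 : Q) = ⊤) :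
    @QuasiSober ↥{P : QIdeal Q | P.IsPrime} (qTop {P : QIdeal Q | P.IsPrime}) ∧
    @T0Space ↥{P : QIdeal Q | P.IsPrime} (qTop {P : QIdeal Q | P.IsPrime}) :=
  ⟨quasiSober_spec htop, t0Space_spec htop⟩

end QuantalePaper
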